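/- Let 𝔳 be a pure nontrivial weakly linked net of finite-dimensional k-vector spaces over a ℤⁿ-quiver Q. Let H₁, H₂, H₃ be finite collections of vertices 1-generating 𝔳 with P(H₁) = H₁ and P(H₂) = H₂. Then Ψ^{H₂}_{H₃} ∘ Ψ^{H₁}_{H₂} = Ψ^{H₁}_{H₃} as maps LP_{H₁}(𝔳) → LP_{H₃}(𝔳), and Ψ^{H₁}_{H₂} : LP_{H₁}(𝔳) → LP_{H₂}(𝔳) is a bijection. -/
import Mathlib


/- Background definitions: ℤⁿ-quivers, linked nets, and associated notions,
following Esteves–Santos–Vital, "Quiver representations arising from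
degenerations of linear series, II". -/

open CategoryTheory CategoryTheory.Limits

namespace LNet
universe w

section QuiverDefs

variable {V : Type*} [Quiver.{w+1} V] {n : ℕ}

/-- The number of arrows of type `t` occurring in the path `p`. -/
def typeCount (τ : ∀ {a b : V}, (a ⟶ b) → Fin (n + 1)) :
    ∀ {a b : V}, Quiver.Path a b → Fin (n + 1) → ℕ
  | _, _, Quiver.Path.nil, _ => 0
  | _, _, Quiver.Path.cons p e, t => typeCount τ p t + (if τ e = t then 1 else 0)

variable (τ : ∀ {a b : V}, (a ⟶ b) → Fin (n + 1))

/-- A path is admissible if it contains no arrow of at least one arrow type. -/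
def Admissible {a b : V} (p : Quiver.Path a b) : Prop :=
  ∃ t : Fin (n + 1), typeCount τ p t = 0

/-- A path is simple if it contains at most one arrow of each type. -/
def SimplePath {a b : V} (p : Quiver.Path a b) : Prop :=
  ∀ t : Fin (n + 1), typeCount τ p t ≤ 1

/-- Two paths with the same source have no arrow type in common. -/
def NoCommonType {a b c : V} (p : Quiver.Path a b) (q : Quiver.Path a c) : Prop :=
  ∀ t : Fin (n + 1), ¬(typeCount τ p t ≠ 0 ∧ typeCount τ q t ≠ 0)

/-- The quiver is a `ℤⁿ`-quiver with respect to the partition of its arrow set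
into the `n + 1` types given by `τ`. -/
structure IsZnQuiver : Prop where
  uniqArrow : ∀ (a : V) (t : Fin (n + 1)), ∃! e : Σ b : V, a ⟶ b, τ e.2 = t
  connAdm : ∀ a b : V, ∃ p : Quiver.Path a b, Admissible τ p
  targetEq : ∀ {a b c : V} (p : Quiver.Path a b) (q : Quiver.Path a c),
      b = c ↔ ∃ d : ℤ, ∀ t : Fin (n + 1),
        (typeCount τ p t : ℤ) - (typeCount τ q t : ℤ) = d

/-- `b = I · a`: there is a simple path from `a` to `b` with essential type `I`. -/
def StepBy (I : Set (Fin (n + 1))) (a b : V) : Prop :=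
  ∃ p : Quiver.Path a b, SimplePath τ p ∧ ∀ t : Fin (n + 1), typeCount τ p t ≠ 0 ↔ t ∈ I

/-- Two distinct vertices connected by a simple path are neighbors. -/
def Neighbors (a b : V) : Prop :=
  a ≠ b ∧ ((∃ p : Quiver.Path a b, SimplePath τ p) ∨ (∃ p : Quiver.Path b a, SimplePath τ p))

/-- A polygon is a nonempty finite set of pairwise neighboring vertices. -/
def IsPolygon (Δ : Finset V) : Prop :=
  Δ.Nonempty ∧ ∀ u ∈ Δ, ∀ v ∈ Δ, u ≠ v → Neighbors τ u v

/-- The hull of a set of vertices. -/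
def hull (H : Set V) : Set V :=
  {v | ∀ t : Fin (n + 1), ∃ z ∈ H, ∃ p : Quiver.Path z v, typeCount τ p t = 0}

/-- `w` is the shadow of `v` in `H`: `w ∈ H` and each `z ∈ H` is connected to `v`
by an admissible path through `w`. -/
def IsShadow (H : Set V) (v w : V) : Prop :=
  w ∈ H ∧ ∀ z ∈ H, ∃ (p : Quiver.Path z w) (q : Quiver.Path w v), Admissible τ (p.comp q)

/-- `v` is a bridge of `v₁` and `v₂`: there are simple admissible paths from `v`
to `v₁` and to `v₂` with no arrow type in common. -/
def IsBridge (v₁ v₂ v : V) : Prop :=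
  ∃ (γ₁ : Quiver.Path v v₁) (γ₂ : Quiver.Path v v₂),
    SimplePath τ γ₁ ∧ Admissible τ γ₁ ∧ SimplePath τ γ₂ ∧ Admissible τ γ₂ ∧
      NoCommonType τ γ₁ γ₂

/-- Two distinct vertices are weakly neighbors if they admit a bridge. -/
def WeaklyNeighbors (v₁ v₂ : V) : Prop :=
  v₁ ≠ v₂ ∧ ∃ v : V, IsBridge τ v₁ v₂ v

/-- Composition of a chain of paths. -/
def chainComp (v : ℕ → V) (α : ∀ i : ℕ, Quiver.Path (v i) (v (i + 1))) :
    ∀ m : ℕ, Quiver.Path (v 0) (v m)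
  | 0 => Quiver.Path.nil
  | (m + 1) => (chainComp v α m).comp (α m)

end QuiverDefs

section AbelianDefs

variable {k : Type*} [Field k]
variable {V : Type*} [Quiver.{w+1} V] {n : ℕ}
variable {C : Type*} [Category C] [Abelian C] [Linear k C]

/-- The composition of the morphisms of `F` along a path. -/
def mapAlong (F : Prefunctor V C) : ∀ {a b : V}, Quiver.Path a b → (F.obj a ⟶ F.obj b)
  | _, _, Quiver.Path.nil => 𝟙 _
  | _, _, Quiver.Path.cons p e => mapAlong F p ≫ F.map e

variable (k) (τ : ∀ {a b : V}, (a ⟶ b) → Fin (n + 1))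

/-- A weakly linked net: maps along two paths with the same endpoints, the second
admissible, agree up to a scalar, and maps along minimal circuits vanish. -/
structure IsWeaklyLinkedNet (F : Prefunctor V C) : Prop where
  scalar : ∀ {a b : V} (γ₁ γ₂ : Quiver.Path a b), Admissible τ γ₂ →
    ∃ c : k, mapAlong F γ₁ = c • mapAlong F γ₂
  circuit : ∀ {a b : V} (γ : Quiver.Path a b), SimplePath τ γ → ¬ Admissible τ γ →
    mapAlong F γ = 0

/-- A linked net: a weakly linked net such that two admissible paths leaving the
same vertex with no arrow type in common have trivially intersecting kernels. -/
def IsLinkedNet (F : Prefunctor V C) : Prop :=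
  IsWeaklyLinkedNet k τ F ∧
    ∀ {a b c : V} (γ₁ : Quiver.Path a b) (γ₂ : Quiver.Path a c),
      Admissible τ γ₁ → Admissible τ γ₂ → NoCommonType τ γ₁ γ₂ →
      ∀ {T : C} (h : T ⟶ F.obj a),
        h ≫ mapAlong F γ₁ = 0 → h ≫ mapAlong F γ₂ = 0 → h = 0

variable {k}

/-- The class `φ^u_v` is zero. -/
def PhiZero (F : Prefunctor V C) (u v : V) : Prop :=
  ∀ p : Quiver.Path u v, Admissible τ p → mapAlong F p = 0

/-- Two vertices are unrelated for the net if the classes `φ^u_v` and `φ^v_u` vanish. -/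
def Unrelated (F : Prefunctor V C) (u v : V) : Prop :=
  PhiZero τ F u v ∧ PhiZero τ F v u

/-- The net is 1-generated by `H`. -/
def OneGenBy (F : Prefunctor V C) (H : Set V) : Prop :=
  ∀ v : V, ∃ u ∈ H, ∃ p : Quiver.Path u v, Epi (mapAlong F p)

/-- The net is generated by `H`. -/
def GeneratedBy (F : Prefunctor V C) (H : Set V) : Prop :=
  ∀ v : V, ∃ s : Finset ((u : V) × Quiver.Path u v),
    (∀ x ∈ s, x.1 ∈ H) ∧ s.sup (fun x => imageSubobject (mapAlong F x.2)) = ⊤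

/-- The net is finitely generated. -/
def FinitelyGenerated (F : Prefunctor V C) : Prop :=
  ∃ H : Set V, H.Finite ∧ GeneratedBy F H

/-- All objects of the net are simple objects. -/
def AllSimple (F : Prefunctor V C) : Prop := ∀ v : V, Simple (F.obj v)

/-- The net is locally finite. -/
def LocallyFinite (F : Prefunctor V C) : Prop :=
  ∀ v : V, ∃ ℓ : ℕ, ∀ (u : V) (p : Quiver.Path u v), ℓ < p.length → mapAlong F p = 0

/-- The net is pure: every epimorphism between associated objects is an isomorphism. -/
def PureRep (F : Prefunctor V C) : Prop :=
  ∀ (u v : V) (f : F.obj u ⟶ F.obj v), Epi f → IsIso f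

/-- The net is exact: `Im φ^{v₁}_{v₂} = Ker φ^{v₂}_{v₁}` for all neighbors. -/
def ExactRep (F : Prefunctor V C) : Prop :=
  ∀ u v : V, Neighbors τ u v → ∀ (p : Quiver.Path u v) (q : Quiver.Path v u),
    Admissible τ p → Admissible τ q →
      imageSubobject (mapAlong F p) = kernelSubobject (mapAlong F q)

/-- The representation `𝔳_H` assembled from a shadow function `sh` and maps `Gmap`. -/
def shadowPrefunctor (F : Prefunctor V C) (sh : V → V)
    (Gmap : ∀ {a b : V}, (a ⟶ b) → (F.obj (sh a) ⟶ F.obj (sh b))) : Prefunctor V C where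
  obj v := F.obj (sh v)
  map e := Gmap e

variable (k)

/-- `(sh, Gmap)` is the data of an `H`-shadow representation of `F`. -/
def IsShadowRep (H : Set V) (F : Prefunctor V C) (sh : V → V)
    (Gmap : ∀ {a b : V}, (a ⟶ b) → (F.obj (sh a) ⟶ F.obj (sh b))) : Prop :=
  (∀ v : V, IsShadow τ H v (sh v)) ∧
    ∀ {a b : V} (e : a ⟶ b),
      ((¬ ∃ (p : Quiver.Path (sh a) a) (q : Quiver.Path a b), Admissible τ (p.comp q)) →
        Gmap e = 0) ∧
      ((∃ (p : Quiver.Path (sh a) a) (q : Quiver.Path a b), Admissible τ (p.comp q)) →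
        ∃ (c : k) (ρ : Quiver.Path (sh a) (sh b)), c ≠ 0 ∧ Admissible τ ρ ∧
          Gmap e = c • mapAlong F ρ)

end AbelianDefs

section VectorDefs

variable {k : Type*} [Field k]
variable {V : Type*} [Quiver.{w+1} V] {n : ℕ}
variable {W : V → Type*} [∀ v, AddCommGroup (W v)] [∀ v, Module k (W v)]

/-- The composition of the linear maps of the representation along a path. -/
def mapAlongL (φ : ∀ {a b : V}, (a ⟶ b) → (W a →ₗ[k] W b)) :
    ∀ {a b : V}, Quiver.Path a b → (W a →ₗ[k] W b)
  | _, _, Quiver.Path.nil => LinearMap.id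
  | _, _, Quiver.Path.cons p e => (φ e).comp (mapAlongL φ p)

variable (k) (τ : ∀ {a b : V}, (a ⟶ b) → Fin (n + 1))
variable (φ : ∀ {a b : V}, (a ⟶ b) → (W a →ₗ[k] W b))

/-- A weakly linked net of vector spaces. -/
structure IsWeaklyLinkedNetL : Prop where
  scalar : ∀ {a b : V} (γ₁ γ₂ : Quiver.Path a b), Admissible τ γ₂ →
    ∃ c : k, mapAlongL φ γ₁ = c • mapAlongL φ γ₂
  circuit : ∀ {a b : V} (γ : Quiver.Path a b), SimplePath τ γ → ¬ Admissible τ γ →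
    mapAlongL φ γ = 0

/-- A linked net of vector spaces. -/
def IsLinkedNetL : Prop :=
  IsWeaklyLinkedNetL k τ φ ∧
    ∀ {a b c : V} (γ₁ : Quiver.Path a b) (γ₂ : Quiver.Path a c),
      Admissible τ γ₁ → Admissible τ γ₂ → NoCommonType τ γ₁ γ₂ →
      LinearMap.ker (mapAlongL φ γ₁) ⊓ LinearMap.ker (mapAlongL φ γ₂) = ⊥

/-- All spaces are nonzero of the same finite dimension. -/
def PureNontrivialL : Prop :=
  (∀ v : V, 0 < Module.finrank k (W v)) ∧
    ∀ u v : V, Module.finrank k (W u) = Module.finrank k (W v)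

/-- The net of vector spaces is 1-generated by `H`. -/
def OneGenL (H : Set V) : Prop :=
  ∀ v : V, ∃ u ∈ H, ∃ p : Quiver.Path u v, Function.Surjective (mapAlongL φ p)

/-- The net of vector spaces is generated by `H`. -/
def GeneratedL (H : Set V) : Prop :=
  ∀ v : V, ∃ s : Finset ((u : V) × Quiver.Path u v),
    (∀ x ∈ s, x.1 ∈ H) ∧ (⨆ x ∈ s, LinearMap.range (mapAlongL φ x.2)) = ⊤

/-- The net of vector spaces is finitely generated. -/
def FinGenL : Prop := ∃ H : Set V, H.Finite ∧ GeneratedL k φ H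

/-- A subrepresentation of pure dimension one: a point of `LP(𝔳)`. -/
def IsLP (L : ∀ v : V, Submodule k (W v)) : Prop :=
  (∀ v : V, Module.finrank k (L v) = 1) ∧
    ∀ (a b : V) (e : a ⟶ b), (L a).map (φ e) ≤ L b

/-- A point of `LP_H(𝔳)`: a tuple of one-dimensional subspaces indexed by `H` such
that the image of the subspace at `v` along any admissible path from `v` to `u`
is contained in the subspace at `u`, for all `v, u ∈ H`. -/
def IsLPH (H : Set V) (M : (v : V) → v ∈ H → Submodule k (W v)) : Prop :=
  (∀ (v : V) (hv : v ∈ H), Module.finrank k (M v hv) = 1) ∧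
    ∀ (v : V) (hv : v ∈ H) (u : V) (hu : u ∈ H) (p : Quiver.Path v u),
      Admissible τ p → (M v hv).map (mapAlongL φ p) ≤ M u hu

/-- The family `L` is generated by the vertex `v₀`. -/
def GenByVertexL (v₀ : V) (L : ∀ v : V, Submodule k (W v)) : Prop :=
  ∀ u : V, L u = ⨆ p : Quiver.Path v₀ u, (L v₀).map (mapAlongL φ p)

/-- The net of vector spaces is exact. -/
def ExactL : Prop :=
  ∀ u v : V, Neighbors τ u v → ∀ (p : Quiver.Path u v) (q : Quiver.Path v u),
    Admissible τ p → Admissible τ q →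
      LinearMap.range (mapAlongL φ p) = LinearMap.ker (mapAlongL φ q)

end VectorDefs

section AuxLemmas

variable {k : Type*} [Field k]
variable {V : Type*} [Quiver.{w+1} V] {n : ℕ}
variable {W : V → Type*} [∀ v, AddCommGroup (W v)] [∀ v, Module k (W v)]
variable [∀ v, FiniteDimensional k (W v)]
variable {τ : ∀ {a b : V}, (a ⟶ b) → Fin (n + 1)}
variable {φ : ∀ {a b : V}, (a ⟶ b) → (W a →ₗ[k] W b)}

lemma mapAlongL_comp {a b c : V} (p : Quiver.Path a b) (q : Quiver.Path b c) :
    mapAlongL φ (p.comp q) = (mapAlongL φ q).comp (mapAlongL φ p) := by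
  induction q with
  | nil => simp [mapAlongL]
  | cons q e ih =>
      simp only [Quiver.Path.comp_cons, mapAlongL, ih, LinearMap.comp_assoc]

lemma typeCount_comp {a b c : V} (p : Quiver.Path a b) (q : Quiver.Path b c)
    (t : Fin (n + 1)) :
    typeCount τ (p.comp q) t = typeCount τ p t + typeCount τ q t := by
  induction q with
  | nil => simp [typeCount]
  | cons q e ih =>
      simp only [Quiver.Path.comp_cons, typeCount, ih]
      ring

lemma Admissible.of_comp_left {a b c : V} {p : Quiver.Path a b} {q : Quiver.Path b c}
    (h : Admissible τ (p.comp q)) : Admissible τ p := by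
  obtain ⟨t, ht⟩ := h
  rw [typeCount_comp] at ht
  exact ⟨t, (Nat.add_eq_zero.mp ht).1⟩

lemma Admissible.of_comp_right {a b c : V} {p : Quiver.Path a b} {q : Quiver.Path b c}
    (h : Admissible τ (p.comp q)) : Admissible τ q := by
  obtain ⟨t, ht⟩ := h
  rw [typeCount_comp] at ht
  exact ⟨t, (Nat.add_eq_zero.mp ht).2⟩

lemma map_smul_of_ne {A B : Type*} [AddCommGroup A] [AddCommGroup B] [Module k A]
    [Module k B] (f : A →ₗ[k] B) {c : k} (hc : c ≠ 0) (p : Submodule k A) :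
    p.map (c • f) = p.map f := by
  ext x
  simp only [Submodule.mem_map, LinearMap.smul_apply]
  constructor
  · rintro ⟨y, hy, rfl⟩
    exact ⟨c • y, p.smul_mem c hy, by simp⟩
  · rintro ⟨y, hy, rfl⟩
    exact ⟨c⁻¹ • y, p.smul_mem _ hy, by simp [smul_smul, mul_inv_cancel₀ hc]⟩

lemma not_surj_zero (hpure : PureNontrivialL k (W := W)) (a b : V) :
    ¬ Function.Surjective (0 : W a →ₗ[k] W b) := by
  intro h0
  have : Nontrivial (W b) := Module.finrank_pos_iff.mp (hpure.1 b)
  obtain ⟨x, hx⟩ := exists_ne (0 : W b)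
  obtain ⟨y, hy⟩ := h0 x
  exact hx (hy.symm.trans (by simp))

lemma smul_surj_aux (hpure : PureNontrivialL k (W := W)) {a b : V}
    {f g : W a →ₗ[k] W b} {c : k} (h : f = c • g) (hf : Function.Surjective f) :
    c ≠ 0 ∧ Function.Surjective g := by
  have hc : c ≠ 0 := by
    rintro rfl
    rw [zero_smul] at h
    exact not_surj_zero hpure a b (h ▸ hf)
  refine ⟨hc, fun x => ?_⟩
  obtain ⟨y, hy⟩ := hf (c • x)
  refine ⟨y, ?_⟩
  have : c • g y = c • x := by rw [← LinearMap.smul_apply, ← h, hy]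
  exact smul_right_injective (W b) hc this

/-- The selected admissible path from the shadow is surjective. -/
lemma sel_surjective (hW : IsWeaklyLinkedNetL k τ φ) (hpure : PureNontrivialL k (W := W))
    {H : Set V} (hg : OneGenL k φ H)
    (sh : V → V) (hsh : ∀ v : V, IsShadow τ H v (sh v))
    (sel : ∀ v : V, Quiver.Path (sh v) v) (hsel : ∀ v : V, Admissible τ (sel v))
    (v : V) : Function.Surjective (mapAlongL φ (sel v)) := by
  obtain ⟨u, hu, γ, hγ⟩ := hg v
  obtain ⟨p, q, hpq⟩ := (hsh v).2 u hu
  obtain ⟨c, hc⟩ := hW.scalar γ (p.comp q) hpq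
  obtain ⟨hc0, hsurj⟩ := smul_surj_aux hpure hc hγ
  rw [mapAlongL_comp] at hsurj
  have hq : Function.Surjective (mapAlongL φ q) := by
    intro x
    obtain ⟨y, hy⟩ := hsurj x
    exact ⟨mapAlongL φ p y, hy⟩
  obtain ⟨c', hc'⟩ := hW.scalar q (sel v) (hsel v)
  exact (smul_surj_aux hpure hc' hq).2

/-- Core pushing lemma: the image of `M z` along any path from `z ∈ H` to `v` is
contained in the image of `M (sh v)` along the selected admissible path. -/
lemma push_le (hW : IsWeaklyLinkedNetL k τ φ) {H : Set V}
    (sh : V → V) (hsh : ∀ v : V, IsShadow τ H v (sh v))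
    (sel : ∀ v : V, Quiver.Path (sh v) v) (hsel : ∀ v : V, Admissible τ (sel v))
    {M : (u : V) → u ∈ H → Submodule k (W u)} (hM : IsLPH k τ φ H M)
    {z v : V} (hz : z ∈ H) (γ : Quiver.Path z v) :
    (M z hz).map (mapAlongL φ γ) ≤ (M (sh v) (hsh v).1).map (mapAlongL φ (sel v)) := by
  obtain ⟨a, b, hab⟩ := (hsh v).2 z hz
  obtain ⟨c, hc⟩ := hW.scalar γ (a.comp b) hab
  rcases eq_or_ne c 0 with rfl | hc0
  · rw [hc, zero_smul, Submodule.map_zero]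
    exact bot_le
  · rw [hc, map_smul_of_ne _ hc0, mapAlongL_comp, Submodule.map_comp]
    have h1 : ((M z hz).map (mapAlongL φ a)).map (mapAlongL φ b) ≤
        (M (sh v) (hsh v).1).map (mapAlongL φ b) :=
      Submodule.map_mono (hM.2 z hz (sh v) (hsh v).1 a hab.of_comp_left)
    refine h1.trans ?_
    obtain ⟨c', hc'⟩ := hW.scalar b (sel v) (hsel v)
    rcases eq_or_ne c' 0 with rfl | hc0'
    · rw [hc', zero_smul, Submodule.map_zero]
      exact bot_le
    · rw [hc', map_smul_of_ne _ hc0']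

lemma finrank_map_of_injective {a b : V} (f : W a →ₗ[k] W b)
    (hf : Function.Injective f) (p : Submodule k (W a)) :
    Module.finrank k (p.map f) = Module.finrank k p :=
  (LinearEquiv.finrank_eq (Submodule.equivMapOfInjective f hf p)).symm

/-- Key identity: transporting via the composite shadow path equals transporting
directly. -/
lemma key_identity (hW : IsWeaklyLinkedNetL k τ φ)
    {H₁ H₂ : Set V}
    (sh₁ : V → V) (hsh₁ : ∀ v : V, IsShadow τ H₁ v (sh₁ v))
    (sel₁ : ∀ v : V, Quiver.Path (sh₁ v) v) (hsel₁ : ∀ v : V, Admissible τ (sel₁ v))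
    (sh₂ : V → V) (hsh₂ : ∀ v : V, IsShadow τ H₂ v (sh₂ v))
    (sel₂ : ∀ v : V, Quiver.Path (sh₂ v) v)
    (hinj₁ : ∀ v : V, Function.Injective (mapAlongL φ (sel₁ v)))
    (hinj₂ : ∀ v : V, Function.Injective (mapAlongL φ (sel₂ v)))
    {M : (u : V) → u ∈ H₁ → Submodule k (W u)} (hM : IsLPH k τ φ H₁ M)
    (v : V) :
    ((M (sh₁ (sh₂ v)) (hsh₁ (sh₂ v)).1).map (mapAlongL φ (sel₁ (sh₂ v)))).map
        (mapAlongL φ (sel₂ v)) =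
      (M (sh₁ v) (hsh₁ v).1).map (mapAlongL φ (sel₁ v)) := by
  have hle : ((M (sh₁ (sh₂ v)) (hsh₁ (sh₂ v)).1).map (mapAlongL φ (sel₁ (sh₂ v)))).map
      (mapAlongL φ (sel₂ v)) ≤ (M (sh₁ v) (hsh₁ v).1).map (mapAlongL φ (sel₁ v)) := by
    rw [← Submodule.map_comp, ← mapAlongL_comp]
    exact push_le hW sh₁ hsh₁ sel₁ hsel₁ hM (hsh₁ (sh₂ v)).1
      ((sel₁ (sh₂ v)).comp (sel₂ v))
  refine Submodule.eq_of_le_of_finrank_le hle ?_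
  rw [finrank_map_of_injective _ (hinj₂ v),
    finrank_map_of_injective _ (hinj₁ (sh₂ v)),
    finrank_map_of_injective _ (hinj₁ v), hM.1 _ _, hM.1 _ _]

/-- When `v ∈ H`, transporting from the shadow gives back `M v`. -/
lemma shadow_map_self {H : Set V}
    (sh : V → V) (hsh : ∀ v : V, IsShadow τ H v (sh v))
    (sel : ∀ v : V, Quiver.Path (sh v) v) (hsel : ∀ v : V, Admissible τ (sel v))
    (hinj : ∀ v : V, Function.Injective (mapAlongL φ (sel v)))
    {M : (u : V) → u ∈ H → Submodule k (W u)} (hM : IsLPH k τ φ H M)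
    {v : V} (hv : v ∈ H) :
    (M (sh v) (hsh v).1).map (mapAlongL φ (sel v)) = M v hv := by
  have hle : (M (sh v) (hsh v).1).map (mapAlongL φ (sel v)) ≤ M v hv :=
    hM.2 (sh v) (hsh v).1 v hv (sel v) (hsel v)
  refine Submodule.eq_of_le_of_finrank_le hle ?_
  rw [finrank_map_of_injective _ (hinj v), hM.1 _ _, hM.1 _ _]

/-- The transported family is again a point of `LP_{H'}`. -/
lemma isLPH_map (hW : IsWeaklyLinkedNetL k τ φ) {H H' : Set V}
    (sh : V → V) (hsh : ∀ v : V, IsShadow τ H v (sh v))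
    (sel : ∀ v : V, Quiver.Path (sh v) v) (hsel : ∀ v : V, Admissible τ (sel v))
    (hinj : ∀ v : V, Function.Injective (mapAlongL φ (sel v)))
    {M : (u : V) → u ∈ H → Submodule k (W u)} (hM : IsLPH k τ φ H M) :
    IsLPH k τ φ H' (fun v _ => (M (sh v) (hsh v).1).map (mapAlongL φ (sel v))) := by
  constructor
  · intro v hv
    rw [finrank_map_of_injective _ (hinj v), hM.1 _ _]
  · intro v hv u hu p _
    rw [← Submodule.map_comp, ← mapAlongL_comp]
    exact push_le hW sh hsh sel hsel hM (hsh v).1 ((sel v).comp p)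

end AuxLemmas

/-- for a pure nontrivial weakly linked net of finite-dimensional
`k`-vector spaces over a `ℤⁿ`-quiver and finite 1-generating collections
`H₁, H₂, H₃` of vertices with `P(H₁) = H₁` and `P(H₂) = H₂`, one has
`Ψ^{H₂}_{H₃} ∘ Ψ^{H₁}_{H₂} = Ψ^{H₁}_{H₃}` on `LP_{H₁}(𝔳)`, and
`Ψ^{H₁}_{H₂} : LP_{H₁}(𝔳) → LP_{H₂}(𝔳)` is a bijection. -/
theorem statement_6
    {k : Type*} [Field k] {V : Type*} [Quiver.{w+1} V] {n : ℕ}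
    {W : V → Type*} [∀ v, AddCommGroup (W v)] [∀ v, Module k (W v)]
    [∀ v, FiniteDimensional k (W v)]
    (τ : ∀ {a b : V}, (a ⟶ b) → Fin (n + 1)) (hZ : IsZnQuiver τ)
    (φ : ∀ {a b : V}, (a ⟶ b) → (W a →ₗ[k] W b))
    (hW : IsWeaklyLinkedNetL k τ φ) (hpure : PureNontrivialL k (W := W))
    (H₁ H₂ H₃ : Set V) (hf₁ : H₁.Finite) (hf₂ : H₂.Finite) (hf₃ : H₃.Finite)
    (hg₁ : OneGenL k φ H₁) (hg₂ : OneGenL k φ H₂) (hg₃ : OneGenL k φ H₃)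
    (hhull₁ : hull τ H₁ = H₁) (hhull₂ : hull τ H₂ = H₂)
    (sh₁ : V → V) (hsh₁ : ∀ v : V, IsShadow τ H₁ v (sh₁ v))
    (sel₁ : ∀ v : V, Quiver.Path (sh₁ v) v) (hsel₁ : ∀ v : V, Admissible τ (sel₁ v))
    (sh₂ : V → V) (hsh₂ : ∀ v : V, IsShadow τ H₂ v (sh₂ v))
    (sel₂ : ∀ v : V, Quiver.Path (sh₂ v) v) (hsel₂ : ∀ v : V, Admissible τ (sel₂ v)) :
    -- Ψ^{H₂}_{H₃} ∘ Ψ^{H₁}_{H₂} = Ψ^{H₁}_{H₃} on LP_{H₁}(𝔳)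
    (∀ M : (u : V) → u ∈ H₁ → Submodule k (W u), IsLPH k τ φ H₁ M →
      ∀ v ∈ H₃,
        ((M (sh₁ (sh₂ v)) (hsh₁ (sh₂ v)).1).map (mapAlongL φ (sel₁ (sh₂ v)))).map
            (mapAlongL φ (sel₂ v)) =
          (M (sh₁ v) (hsh₁ v).1).map (mapAlongL φ (sel₁ v))) ∧
    -- Ψ^{H₁}_{H₂} : LP_{H₁}(𝔳) → LP_{H₂}(𝔳) is a bijection
    (∃ f : {M : (u : V) → u ∈ H₁ → Submodule k (W u) // IsLPH k τ φ H₁ M} →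
        {N : (u : V) → u ∈ H₂ → Submodule k (W u) // IsLPH k τ φ H₂ N},
      (∀ M (v : V) (hv : v ∈ H₂),
        (f M).1 v hv = (M.1 (sh₁ v) (hsh₁ v).1).map (mapAlongL φ (sel₁ v))) ∧
      Function.Bijective f) := by
  -- injectivity of the selected shadow maps
  have hinj₁ : ∀ v : V, Function.Injective (mapAlongL φ (sel₁ v)) := fun v =>
    (LinearMap.injective_iff_surjective_of_finrank_eq_finrank
      (hpure.2 (sh₁ v) v)).mpr (sel_surjective hW hpure hg₁ sh₁ hsh₁ sel₁ hsel₁ v)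
  have hinj₂ : ∀ v : V, Function.Injective (mapAlongL φ (sel₂ v)) := fun v =>
    (LinearMap.injective_iff_surjective_of_finrank_eq_finrank
      (hpure.2 (sh₂ v) v)).mpr (sel_surjective hW hpure hg₂ sh₂ hsh₂ sel₂ hsel₂ v)
  constructor
  · intro M hM v _
    exact key_identity hW sh₁ hsh₁ sel₁ hsel₁ sh₂ hsh₂ sel₂ hinj₁ hinj₂ hM v
  · refine ⟨fun M => ⟨fun v _ => (M.1 (sh₁ v) (hsh₁ v).1).map (mapAlongL φ (sel₁ v)),
      isLPH_map hW sh₁ hsh₁ sel₁ hsel₁ hinj₁ M.2⟩, fun M v hv => rfl, ?_⟩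
    let g : {N : (u : V) → u ∈ H₂ → Submodule k (W u) // IsLPH k τ φ H₂ N} →
        {M : (u : V) → u ∈ H₁ → Submodule k (W u) // IsLPH k τ φ H₁ M} := fun N =>
      ⟨fun v _ => (N.1 (sh₂ v) (hsh₂ v).1).map (mapAlongL φ (sel₂ v)),
        isLPH_map hW sh₂ hsh₂ sel₂ hsel₂ hinj₂ N.2⟩
    have hgf : ∀ M, g ⟨fun v _ => (M.1 (sh₁ v) (hsh₁ v).1).map (mapAlongL φ (sel₁ v)),
        isLPH_map hW sh₁ hsh₁ sel₁ hsel₁ hinj₁ M.2⟩ = M := by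
      intro M
      refine Subtype.ext (funext fun v => funext fun hv => ?_)
      show ((M.1 (sh₁ (sh₂ v)) (hsh₁ (sh₂ v)).1).map (mapAlongL φ (sel₁ (sh₂ v)))).map
          (mapAlongL φ (sel₂ v)) = M.1 v hv
      rw [key_identity hW sh₁ hsh₁ sel₁ hsel₁ sh₂ hsh₂ sel₂ hinj₁ hinj₂ M.2 v,
        shadow_map_self sh₁ hsh₁ sel₁ hsel₁ hinj₁ M.2 hv]
    have hfg : ∀ N, (⟨fun v _ => ((g N).1 (sh₁ v) (hsh₁ v).1).map (mapAlongL φ (sel₁ v)),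
        isLPH_map hW sh₁ hsh₁ sel₁ hsel₁ hinj₁ (g N).2⟩ :
        {N : (u : V) → u ∈ H₂ → Submodule k (W u) // IsLPH k τ φ H₂ N}) = N := by
      intro N
      refine Subtype.ext (funext fun v => funext fun hv => ?_)
      show ((N.1 (sh₂ (sh₁ v)) (hsh₂ (sh₁ v)).1).map (mapAlongL φ (sel₂ (sh₁ v)))).map
          (mapAlongL φ (sel₁ v)) = N.1 v hv
      rw [key_identity hW sh₂ hsh₂ sel₂ hsel₂ sh₁ hsh₁ sel₁ hinj₂ hinj₁ N.2 v,
        shadow_map_self sh₂ hsh₂ sel₂ hsel₂ hinj₂ N.2 hv]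
    exact ⟨fun a b hab => by rw [← hgf a, ← hgf b]; exact congrArg g hab,
      fun N => ⟨g N, hfg N⟩⟩

end LNet
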